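/- (Generating function for generalized Cauchy polynomials) For |xt| < 1, ∑_{n=0}^∞ p_n(x,y,a) t^n/(q;q)_n = (1/(xt;q)_∞) · ₁Φ₁(a; 0; q, yt), where p_n(x,y,a) := ∑_{k=0}^n \binom{n}{k}_q (-1)^k q^{\binom{k}{2}} (a;q)_k x^{n-k} y^k and ₁Φ₁(a;0;q,z) := ∑_{m=0}^∞ (-1)^m q^{\binom{m}{2}} (a;q)_m z^m/(q;q)_m. -/

import Mathlib

open Finset

noncomputable def qPoch (q a : ℂ) (n : ℕ) : ℂ := ∏ j ∈ Finset.range n, (1 - a * q ^ j)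

noncomputable def qPochInf (q a : ℂ) : ℂ := ∏' j : ℕ, (1 - a * q ^ j)

noncomputable def cauchyP (q x y : ℂ) (n : ℕ) : ℂ := ∏ j ∈ Finset.range n, (x - q ^ j * y)

noncomputable def qBinom (q : ℂ) (n k : ℕ) : ℂ := qPoch q q n / (qPoch q q k * qPoch q q (n - k))

noncomputable def qDeriv (q : ℂ) (f : ℂ → ℂ) : ℂ → ℂ := fun x => (f x - f (q * x)) / x

noncomputable def qTheta (q : ℂ) (f : ℂ → ℂ → ℂ) : ℂ → ℂ → ℂ :=
  fun x y => (f (q⁻¹ * x) y - f x (q * y)) / (q⁻¹ * x - y)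

/-- `₁Φ₁(a; 0; q, z)` -/
noncomputable def phi11 (q a z : ℂ) : ℂ :=
  ∑' m : ℕ, (-1) ^ m * q ^ m.choose 2 * qPoch q a m * z ^ m / qPoch q q m

/-- generalized Cauchy polynomials `p_n(x,y,a)` -/
noncomputable def genCauchy (q a x y : ℂ) (n : ℕ) : ℂ :=
  ∑ k ∈ Finset.range (n + 1),
    qBinom q n k * (-1) ^ k * q ^ k.choose 2 * qPoch q a k * x ^ (n - k) * y ^ k

/-- generalized Hahn polynomials `h_n(x,y,a,b|q)` -/
noncomputable def hahn (q x y a b : ℂ) (n : ℕ) : ℂ :=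
  ∑ k ∈ Finset.range (n + 1),
    qBinom q n k * (-1) ^ k * q ^ k.choose 2 * b ^ k * qPoch q a k * cauchyP q y x (n - k)

/-!
Expanding the q-binomial coefficient, `p_n(x,y,a) tⁿ / (q;q)ₙ` is the `n`-th coefficient of the
Cauchy product of `₁Φ₁(a; 0; q, yt)` with the q-exponential `e_q(xt) = ∑ (xt)ⁿ / (q;q)ₙ`; both
series converge absolutely by the ratio test. It remains to prove Euler's identity
`e_q(z) = 1 / (z;q)_∞`: the termwise relation `e_q(z) - e_q(qz) = z e_q(z)` iterates to
`e_q(qᴺ z) = (z;q)_N e_q(z)`, and letting `N → ∞` uses that `e_q` is continuous at `0`.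
-/

open Filter Topology

noncomputable def qExp (q z : ℂ) : ℂ := ∑' n : ℕ, z ^ n / qPoch q q n

lemma summable_norm_of_succ_eq_mul {R : Type*} [SeminormedRing R] {f c : ℕ → R} {L : R}
    (hL : ‖L‖ < 1) (hc : Tendsto c atTop (𝓝 L)) (hf : ∀ n, f (n + 1) = c n * f n) :
    Summable fun n => ‖f n‖ := by
  obtain ⟨r, hLr, hr1⟩ := exists_between hL
  refine summable_of_ratio_norm_eventually_le hr1 ?_
  filter_upwards [hc.norm.eventually_lt_const hLr] with n hn
  rw [norm_norm, norm_norm, hf]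
  exact (norm_mul_le _ _).trans (mul_le_mul_of_nonneg_right hn.le (norm_nonneg _))

section qPoch

variable {q a : ℂ}

lemma qPoch_zero (q a : ℂ) : qPoch q a 0 = 1 := prod_range_zero _

lemma qPoch_succ (q a : ℂ) (n : ℕ) : qPoch q a (n + 1) = qPoch q a n * (1 - a * q ^ n) :=
  prod_range_succ _ _

lemma norm_mul_pow_lt_one (ha : ‖a‖ < 1) (hq : ‖q‖ ≤ 1) (j : ℕ) : ‖a * q ^ j‖ < 1 := by
  rw [norm_mul, norm_pow]
  exact mul_lt_one_of_nonneg_of_lt_one_left (norm_nonneg a) ha (pow_le_one₀ (norm_nonneg q) hq)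

lemma one_sub_mul_pow_ne_zero (ha : ‖a‖ < 1) (hq : ‖q‖ ≤ 1) (j : ℕ) : 1 - a * q ^ j ≠ 0 :=
  sub_ne_zero.2 fun h => (norm_mul_pow_lt_one ha hq j).ne (by rw [← h, norm_one])

lemma qPoch_ne_zero (ha : ‖a‖ < 1) (hq : ‖q‖ ≤ 1) (n : ℕ) : qPoch q a n ≠ 0 :=
  prod_ne_zero_iff.2 fun j _ => one_sub_mul_pow_ne_zero ha hq j

lemma tendsto_one_sub_mul_pow (hq : ‖q‖ < 1) (a : ℂ) :
    Tendsto (fun n : ℕ => 1 - a * q ^ n) atTop (𝓝 1) := by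
  simpa using tendsto_const_nhds.sub ((tendsto_pow_atTop_nhds_zero_of_norm_lt_one hq).const_mul a)

lemma tendsto_qPoch_qPochInf (hq : ‖q‖ < 1) (a : ℂ) :
    Tendsto (qPoch q a) atTop (𝓝 (qPochInf q a)) := by
  have hsum : Summable fun j : ℕ => -(a * q ^ j) :=
    ((summable_geometric_of_norm_lt_one hq).mul_left a).neg
  have h := (Complex.multipliable_one_add_of_summable hsum).tendsto_prod_tprod_nat
  simp only [← sub_eq_add_neg] at h
  exact h

end qPoch

section qExp

variable {q z : ℂ}

lemma summable_norm_qExp_term (hq : ‖q‖ < 1) (hz : ‖z‖ < 1) :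
    Summable fun n => ‖z ^ n / qPoch q q n‖ := by
  refine summable_norm_of_succ_eq_mul (c := fun n => z / (1 - q * q ^ n)) hz ?_ fun n => ?_
  · simpa [Pi.div_def] using
      (tendsto_const_nhds (x := z)).div (tendsto_one_sub_mul_pow hq q) one_ne_zero
  · have := qPoch_ne_zero hq hq.le n
    have := one_sub_mul_pow_ne_zero hq hq.le n
    rw [qPoch_succ, pow_succ]
    field_simp

lemma summable_qExp_term (hq : ‖q‖ < 1) (hz : ‖z‖ < 1) :
    Summable fun n => z ^ n / qPoch q q n :=
  (summable_norm_qExp_term hq hz).of_norm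

lemma qExp_sub_qExp_mul (hq : ‖q‖ < 1) (hz : ‖z‖ < 1) :
    qExp q z - qExp q (q * z) = z * qExp q z := by
  have hqz : ‖q * z‖ < 1 := by simpa [mul_comm] using norm_mul_pow_lt_one hz hq.le 1
  have hu := summable_qExp_term hq hz
  have hw := summable_qExp_term hq hqz
  have hu' := (summable_nat_add_iff 1).2 hu
  have hw' := (summable_nat_add_iff 1).2 hw
  calc qExp q z - qExp q (q * z)
      = ∑' n : ℕ, (z ^ (n + 1) / qPoch q q (n + 1) - (q * z) ^ (n + 1) / qPoch q q (n + 1)) := by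
        rw [qExp, qExp, hu.tsum_eq_zero_add, hw.tsum_eq_zero_add, hu'.tsum_sub hw']
        simp only [pow_zero]
        ring
    _ = ∑' n : ℕ, z * (z ^ n / qPoch q q n) := by
        refine tsum_congr fun n => ?_
        have := qPoch_ne_zero hq hq.le n
        have := one_sub_mul_pow_ne_zero hq hq.le n
        rw [qPoch_succ, mul_pow, pow_succ q, pow_succ z]
        field_simp
    _ = z * qExp q z := tsum_mul_left

lemma qExp_pow_mul (hq : ‖q‖ < 1) (hz : ‖z‖ < 1) (N : ℕ) :
    qExp q (q ^ N * z) = qPoch q z N * qExp q z := by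
  induction N with
  | zero => simp [qPoch_zero]
  | succ N ih =>
    have hqNz : ‖q ^ N * z‖ < 1 := by simpa [mul_comm] using norm_mul_pow_lt_one hz hq.le N
    rw [pow_succ', mul_assoc, qPoch_succ]
    linear_combination -qExp_sub_qExp_mul hq hqNz + (1 - q ^ N * z) * ih

lemma tendsto_qExp_nhds_zero (hq : ‖q‖ < 1) : Tendsto (qExp q) (𝓝 0) (𝓝 1) := by
  have hterm : ∀ n : ℕ, Tendsto (fun w : ℂ => w ^ n / qPoch q q n) (𝓝 0)
      (𝓝 (if n = 0 then 1 else 0)) := by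
    rintro (_ | n)
    · simp [qPoch_zero]
    · simpa using ((continuous_pow (n + 1)).tendsto (0 : ℂ)).div_const (qPoch q q (n + 1))
  have hbound : ∀ᶠ w : ℂ in 𝓝 0, ∀ n : ℕ,
      ‖w ^ n / qPoch q q n‖ ≤ ‖(1 / 2 : ℂ) ^ n / qPoch q q n‖ := by
    filter_upwards [Metric.closedBall_mem_nhds (0 : ℂ) one_half_pos] with w hw n
    rw [norm_div, norm_div, norm_pow, norm_pow]
    gcongr
    simpa using hw
  have := tendsto_tsum_of_dominated_convergence
    (summable_norm_qExp_term hq (by norm_num)) hterm hbound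
  rwa [tsum_ite_eq 0 (fun _ => (1 : ℂ))] at this

theorem qPochInf_mul_qExp (hq : ‖q‖ < 1) (hz : ‖z‖ < 1) : qPochInf q z * qExp q z = 1 := by
  have hlim : Tendsto (fun N : ℕ => qExp q (q ^ N * z)) atTop (𝓝 1) :=
    (tendsto_qExp_nhds_zero hq).comp
      (by simpa using (tendsto_pow_atTop_nhds_zero_of_norm_lt_one hq).mul_const z)
  refine tendsto_nhds_unique ((tendsto_qPoch_qPochInf hq z).mul_const _) ?_
  simpa only [qExp_pow_mul hq hz] using hlim

end qExp

section Cauchy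

variable {q : ℂ}

lemma summable_norm_phi11_term (hq : ‖q‖ < 1) (a z : ℂ) :
    Summable fun m =>
      ‖(-1) ^ m * q ^ m.choose 2 * qPoch q a m * z ^ m / qPoch q q m‖ := by
  refine summable_norm_of_succ_eq_mul
    (c := fun m => -(q ^ m * (1 - a * q ^ m) * z) / (1 - q * q ^ m)) (L := 0) (by simp)
    ?_ fun m => ?_
  · have hpow := tendsto_pow_atTop_nhds_zero_of_norm_lt_one hq
    simpa [Pi.div_def] using ((hpow.mul (tendsto_one_sub_mul_pow hq a)).mul_const z).neg.div
      (tendsto_one_sub_mul_pow hq q) one_ne_zero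
  · have := qPoch_ne_zero hq hq.le m
    have := one_sub_mul_pow_ne_zero hq hq.le m
    rw [Nat.choose_succ_succ', Nat.choose_one_right, qPoch_succ, qPoch_succ, pow_add, pow_succ,
      pow_succ]
    field_simp
    ring

lemma genCauchy_mul_pow_div (hq : ‖q‖ < 1) (a x y t : ℂ) (n : ℕ) :
    genCauchy q a x y n * t ^ n / qPoch q q n =
      ∑ k ∈ range (n + 1),
        (-1) ^ k * q ^ k.choose 2 * qPoch q a k * (y * t) ^ k / qPoch q q k *
          ((x * t) ^ (n - k) / qPoch q q (n - k)) := by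
  rw [genCauchy, sum_mul, sum_div]
  refine sum_congr rfl fun k hk => ?_
  have := qPoch_ne_zero hq hq.le k
  have := qPoch_ne_zero hq hq.le (n - k)
  have := qPoch_ne_zero hq hq.le n
  rw [qBinom, ← pow_mul_pow_sub t (Nat.lt_succ_iff.1 (mem_range.1 hk))]
  field_simp
  ring

end Cauchy

theorem stmt12 (q : ℝ) (hq0 : 0 < q) (hq1 : q < 1) (a x y t : ℂ)
    (hxt : ‖x * t‖ < 1) :
    ∑' n : ℕ, genCauchy (q : ℂ) a x y n * t ^ n / qPoch (q : ℂ) (q : ℂ) n =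
      1 / qPochInf (q : ℂ) (x * t) * phi11 (q : ℂ) a (y * t) := by
  have hq : ‖(q : ℂ)‖ < 1 := by rwa [Complex.norm_real, Real.norm_of_nonneg hq0.le]
  rw [tsum_congr (genCauchy_mul_pow_div hq a x y t),
    ← tsum_mul_tsum_eq_tsum_sum_range_of_summable_norm (summable_norm_phi11_term hq a (y * t))
      (summable_norm_qExp_term hq hxt),
    ← phi11, ← qExp, eq_one_div_of_mul_eq_one_right (qPochInf_mul_qExp hq hxt), mul_comm]
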